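/- (Local Godbillon–Vey conservation law) Let Ã, η, u be smooth ℝ³-valued fields and α a smooth scalar field on ℝ × ℝ³. Assume the Frobenius integrability relation ∇×Ã = η × Ã and the evolution equation ∂η/∂t − u×(∇×η) + ∇(u·η) = α Ã. Then the Godbillon–Vey density ψ = η·(∇×η) satisfies the local conservation law ∂ψ/∂t + ∇·( u ψ + α ∇×Ã ) = 0. -/

import Mathlib

noncomputable section

/-- Vectors in ℝ³. -/
abbrev Vec3 : Type := Fin 3 → ℝ

/-- Points of space-time: `(t, x)` with `t : ℝ`, `x : Fin 3 → ℝ`. -/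
abbrev Pt : Type := ℝ × Vec3

/-- Euclidean dot product on ℝ³. -/
def dot3 (a b : Vec3) : ℝ := ∑ i, a i * b i

/-- Cross product on ℝ³. -/
def cross3 (a b : Vec3) : Vec3 :=
  ![a 1 * b 2 - a 2 * b 1, a 2 * b 0 - a 0 * b 2, a 0 * b 1 - a 1 * b 0]

/-- Spatial partial derivative ∂f/∂xᵢ of a scalar field. -/
def pd (i : Fin 3) (f : Pt → ℝ) (p : Pt) : ℝ :=
  fderiv ℝ (fun x => f (p.1, x)) p.2 (Pi.single i 1)

/-- Time derivative ∂f/∂t of a scalar field. -/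
def dt (f : Pt → ℝ) (p : Pt) : ℝ := deriv (fun s => f (s, p.2)) p.1

/-- Time derivative of a vector field, componentwise. -/
def dtVec (F : Pt → Vec3) (p : Pt) : Vec3 := fun i => dt (fun q => F q i) p

/-- Spatial gradient ∇f of a scalar field. -/
def grad3 (f : Pt → ℝ) (p : Pt) : Vec3 := fun i => pd i f p

/-- Spatial divergence ∇·F of a vector field. -/
def div3 (F : Pt → Vec3) (p : Pt) : ℝ := ∑ i, pd i (fun q => F q i) p

/-- Spatial curl ∇×F of a vector field. -/
def curl3 (F : Pt → Vec3) (p : Pt) : Vec3 :=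
  ![pd 1 (fun q => F q 2) p - pd 2 (fun q => F q 1) p,
    pd 2 (fun q => F q 0) p - pd 0 (fun q => F q 2) p,
    pd 0 (fun q => F q 1) p - pd 1 (fun q => F q 0) p]

/-- Directional derivative (u·∇)f of a scalar field. -/
def dirD (u : Pt → Vec3) (f : Pt → ℝ) (p : Pt) : ℝ := ∑ i, u p i * pd i f p

/-- Directional derivative (u·∇)F of a vector field. -/
def dirDVec (u F : Pt → Vec3) (p : Pt) : Vec3 :=
  fun j => ∑ i, u p i * pd i (fun q => F q j) p

/-- (∇u)ᵀ·A, the vector with i-th component ∑ⱼ (∂uʲ/∂xⁱ) Aⱼ. -/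
def gradTdot (u A : Pt → Vec3) (p : Pt) : Vec3 :=
  fun i => ∑ j, pd i (fun q => u q j) p * A p j

/-- A field is smooth when it is C^∞ jointly in time and space. -/
def SmoothS (f : Pt → ℝ) : Prop := ContDiff ℝ (⊤ : ℕ∞) f

/-- A vector field is smooth when it is C^∞ jointly in time and space. -/
def SmoothV (F : Pt → Vec3) : Prop := ContDiff ℝ (⊤ : ℕ∞) F

/-!
The density `ψ = η · ω`, `ω = ∇ × η`, is the helicity density of `η`, and for all smooth `η`, `u`
it obeys the balance law `∂ₜψ + ∇ · (ψ u + η × L) = 2 L · ω` with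
`L = ∂ₜη - u × ω + ∇(u · η)`. This follows from `∂ₜψ = ∂ₜη · ω + η · ∇ × ∂ₜη`,
`∇ · (a × b) = b · ∇ × a - a · ∇ × b`, `η × (u × ω) = ψ u - (u · η) ω`, `∇ · ∇ × = 0` and
`∇ × ∇ = 0`. The evolution equation says `L = α Ã`, and then the Frobenius relation turns
`η × L` into `α ∇ × Ã`, while `Ã · ω = 0` because `0 = ∇ · (∇ × Ã) = ∇ · (η × Ã) = Ã · ω`.
-/

theorem fderiv_fderiv_apply_comm {E : Type*} [NormedAddCommGroup E] [NormedSpace ℝ E]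
    {f : E → ℝ} (hf : ContDiff ℝ 2 f) (v w x : E) :
    fderiv ℝ (fun y => fderiv ℝ f y v) x w = fderiv ℝ (fun y => fderiv ℝ f y w) x v := by
  have hdf : Differentiable ℝ (fderiv ℝ f) :=
    (hf.fderiv_right (m := 1) le_rfl).differentiable one_ne_zero
  have happly (u : E) :
      fderiv ℝ (fun y => fderiv ℝ f y u) x = (fderiv ℝ (fderiv ℝ f) x).flip u := by
    simp [fderiv_clm_apply (hdf x) (differentiableAt_const u)]
  rw [happly, happly]
  exact (hf.contDiffAt.isSymmSndFDerivAt (by simp)).eq w v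

section FirstDerivatives

variable {f g : Pt → ℝ} {p : Pt}

theorem pd_eq_fderiv (hf : DifferentiableAt ℝ f p) (i : Fin 3) :
    pd i f p = fderiv ℝ f p (0, Pi.single i 1) := by
  have hslice : HasFDerivAt (fun x : Vec3 => (p.1, x)) (ContinuousLinearMap.inr ℝ ℝ Vec3) p.2 :=
    (hasFDerivAt_const p.1 p.2).prodMk (hasFDerivAt_id p.2)
  exact DFunLike.congr_fun (hf.hasFDerivAt.comp p.2 hslice).fderiv (Pi.single i 1)

theorem dt_eq_fderiv (hf : DifferentiableAt ℝ f p) : dt f p = fderiv ℝ f p (1, 0) := by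
  have hslice : HasFDerivAt (fun s : ℝ => (s, p.2)) (ContinuousLinearMap.inl ℝ ℝ Vec3) p.1 :=
    (hasFDerivAt_id p.1).prodMk (hasFDerivAt_const p.2 p.1)
  exact (hf.hasFDerivAt.comp p.1 hslice).hasDerivAt.deriv

theorem pd_add (hf : DifferentiableAt ℝ f p) (hg : DifferentiableAt ℝ g p) (i : Fin 3) :
    pd i (fun q => f q + g q) p = pd i f p + pd i g p := by
  rw [pd_eq_fderiv (hf.fun_add hg), fderiv_fun_add hf hg, pd_eq_fderiv hf, pd_eq_fderiv hg]
  rfl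

theorem pd_sub (hf : DifferentiableAt ℝ f p) (hg : DifferentiableAt ℝ g p) (i : Fin 3) :
    pd i (fun q => f q - g q) p = pd i f p - pd i g p := by
  rw [pd_eq_fderiv (hf.fun_sub hg), fderiv_fun_sub hf hg, pd_eq_fderiv hf, pd_eq_fderiv hg]
  rfl

theorem pd_mul (hf : DifferentiableAt ℝ f p) (hg : DifferentiableAt ℝ g p) (i : Fin 3) :
    pd i (fun q => f q * g q) p = pd i f p * g p + f p * pd i g p := by
  rw [pd_eq_fderiv (hf.fun_mul hg), fderiv_fun_mul hf hg, pd_eq_fderiv hf, pd_eq_fderiv hg]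
  simp only [add_apply, smul_apply, smul_eq_mul]
  ring

theorem dt_add (hf : DifferentiableAt ℝ f p) (hg : DifferentiableAt ℝ g p) :
    dt (fun q => f q + g q) p = dt f p + dt g p := by
  rw [dt_eq_fderiv (hf.fun_add hg), fderiv_fun_add hf hg, dt_eq_fderiv hf, dt_eq_fderiv hg]
  rfl

theorem dt_sub (hf : DifferentiableAt ℝ f p) (hg : DifferentiableAt ℝ g p) :
    dt (fun q => f q - g q) p = dt f p - dt g p := by
  rw [dt_eq_fderiv (hf.fun_sub hg), fderiv_fun_sub hf hg, dt_eq_fderiv hf, dt_eq_fderiv hg]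
  rfl

theorem dt_mul (hf : DifferentiableAt ℝ f p) (hg : DifferentiableAt ℝ g p) :
    dt (fun q => f q * g q) p = dt f p * g p + f p * dt g p := by
  rw [dt_eq_fderiv (hf.fun_mul hg), fderiv_fun_mul hf hg, dt_eq_fderiv hf, dt_eq_fderiv hg]
  simp only [add_apply, smul_apply, smul_eq_mul]
  ring

end FirstDerivatives

section SecondDerivatives

variable {f : Pt → ℝ} {n m : WithTop ℕ∞}

theorem pd_fun_eq_fderiv (hf : Differentiable ℝ f) (i : Fin 3) :
    pd i f = fun q => fderiv ℝ f q (0, Pi.single i 1) :=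
  funext fun q => pd_eq_fderiv (hf q) i

theorem dt_fun_eq_fderiv (hf : Differentiable ℝ f) : dt f = fun q => fderiv ℝ f q (1, 0) :=
  funext fun q => dt_eq_fderiv (hf q)

theorem ContDiff.fderiv_apply_right (hf : ContDiff ℝ n f) (hmn : m + 1 ≤ n) (v : Pt) :
    ContDiff ℝ m (fun q => fderiv ℝ f q v) :=
  (hf.fderiv_right hmn).clm_apply contDiff_const

theorem ContDiff.pd (hf : ContDiff ℝ n f) (hmn : m + 1 ≤ n) (i : Fin 3) :
    ContDiff ℝ m (pd i f) := by
  have hdf := hf.differentiable (ne_bot_of_le_ne_bot (by simp) hmn)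
  rw [pd_fun_eq_fderiv hdf]
  exact hf.fderiv_apply_right hmn _

theorem ContDiff.dt (hf : ContDiff ℝ n f) (hmn : m + 1 ≤ n) : ContDiff ℝ m (dt f) := by
  have hdf := hf.differentiable (ne_bot_of_le_ne_bot (by simp) hmn)
  rw [dt_fun_eq_fderiv hdf]
  exact hf.fderiv_apply_right hmn _

theorem pd_pd_comm (hf : ContDiff ℝ 2 f) (i j : Fin 3) (p : Pt) :
    pd i (pd j f) p = pd j (pd i f) p := by
  have hdf := hf.differentiable two_ne_zero
  have hdv (v : Pt) := (hf.fderiv_apply_right (m := 1) le_rfl v).differentiable one_ne_zero p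
  rw [pd_fun_eq_fderiv hdf, pd_fun_eq_fderiv hdf, pd_eq_fderiv (hdv _), pd_eq_fderiv (hdv _)]
  exact fderiv_fderiv_apply_comm hf _ _ p

theorem dt_pd_comm (hf : ContDiff ℝ 2 f) (i : Fin 3) (p : Pt) :
    dt (pd i f) p = pd i (dt f) p := by
  have hdf := hf.differentiable two_ne_zero
  have hdv (v : Pt) := (hf.fderiv_apply_right (m := 1) le_rfl v).differentiable one_ne_zero p
  rw [pd_fun_eq_fderiv hdf, dt_fun_eq_fderiv hdf, pd_eq_fderiv (hdv _), dt_eq_fderiv (hdv _)]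
  exact fderiv_fderiv_apply_comm hf _ _ p

end SecondDerivatives

theorem dot3_eq_dotProduct (a b : Vec3) : dot3 a b = a ⬝ᵥ b := rfl

theorem cross3_eq_crossProduct (a b : Vec3) : cross3 a b = crossProduct a b :=
  (cross_apply a b).symm

section VectorCalculus

variable {a b F : Pt → Vec3} {f : Pt → ℝ} {p : Pt} {n m : WithTop ℕ∞}

theorem ContDiff.dot3 (ha : ContDiff ℝ n a) (hb : ContDiff ℝ n b) :
    ContDiff ℝ n (fun q => dot3 (a q) (b q)) := by
  unfold _root_.dot3
  fun_prop

theorem ContDiff.cross3 (ha : ContDiff ℝ n a) (hb : ContDiff ℝ n b) :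
    ContDiff ℝ n (fun q => cross3 (a q) (b q)) := by
  refine contDiff_pi.2 fun i => ?_
  fin_cases i <;>
    simp only [_root_.cross3, Fin.zero_eta, Fin.mk_one, Fin.reduceFinMk, Matrix.cons_val] <;>
    fun_prop

theorem ContDiff.grad3 (hf : ContDiff ℝ n f) (hmn : m + 1 ≤ n) : ContDiff ℝ m (grad3 f) :=
  contDiff_pi.2 fun i => hf.pd hmn i

theorem ContDiff.dtVec (hF : ContDiff ℝ n F) (hmn : m + 1 ≤ n) : ContDiff ℝ m (dtVec F) :=
  contDiff_pi.2 fun i => (contDiff_pi.1 hF i).dt hmn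

theorem ContDiff.curl3 (hF : ContDiff ℝ n F) (hmn : m + 1 ≤ n) : ContDiff ℝ m (curl3 F) := by
  have hpd (i j : Fin 3) : ContDiff ℝ m (_root_.pd i fun q => F q j) :=
    (contDiff_pi.1 hF j).pd hmn i
  refine contDiff_pi.2 fun i => ?_
  fin_cases i <;> exact (hpd _ _).sub (hpd _ _)

theorem dt_dot3 (ha : DifferentiableAt ℝ a p) (hb : DifferentiableAt ℝ b p) :
    dt (fun q => dot3 (a q) (b q)) p = dot3 (dtVec a p) (b p) + dot3 (a p) (dtVec b p) := by
  have ha' := differentiableAt_pi.1 ha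
  have hb' := differentiableAt_pi.1 hb
  simp only [dot3, dtVec, Fin.sum_univ_three]
  rw [dt_add (by fun_prop) (by fun_prop), dt_add (by fun_prop) (by fun_prop),
    dt_mul (ha' 0) (hb' 0), dt_mul (ha' 1) (hb' 1), dt_mul (ha' 2) (hb' 2)]
  ring

theorem div3_add (ha : DifferentiableAt ℝ a p) (hb : DifferentiableAt ℝ b p) :
    div3 (fun q => a q + b q) p = div3 a p + div3 b p := by
  simp only [div3, Pi.add_apply, ← Finset.sum_add_distrib]
  exact Finset.sum_congr rfl fun i _ =>
    pd_add (differentiableAt_pi.1 ha i) (differentiableAt_pi.1 hb i) i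

theorem div3_smul (hf : DifferentiableAt ℝ f p) (hF : DifferentiableAt ℝ F p) :
    div3 (fun q => f q • F q) p = dot3 (grad3 f p) (F p) + f p * div3 F p := by
  simp only [div3, dot3, grad3, Pi.smul_apply, smul_eq_mul, Finset.mul_sum,
    ← Finset.sum_add_distrib]
  exact Finset.sum_congr rfl fun i _ => pd_mul hf (differentiableAt_pi.1 hF i) i

theorem div3_cross3 (ha : DifferentiableAt ℝ a p) (hb : DifferentiableAt ℝ b p) :
    div3 (fun q => cross3 (a q) (b q)) p = dot3 (b p) (curl3 a p) - dot3 (a p) (curl3 b p) := by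
  have ha' := differentiableAt_pi.1 ha
  have hb' := differentiableAt_pi.1 hb
  simp only [div3, cross3, dot3, curl3, Fin.sum_univ_three, Matrix.cons_val_zero,
    Matrix.cons_val_one, Matrix.cons_val_two, Matrix.head_cons, Matrix.tail_cons]
  simp (disch := fun_prop) only [pd_sub, pd_mul]
  ring

theorem div3_curl3 (hF : ContDiff ℝ 2 F) (p : Pt) : div3 (curl3 F) p = 0 := by
  have hpd (i j : Fin 3) : DifferentiableAt ℝ (pd i fun q => F q j) p :=
    ((contDiff_pi.1 hF j).pd (m := 1) (by norm_num) i).differentiable one_ne_zero p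
  have hcomm (i j k : Fin 3) := pd_pd_comm (contDiff_pi.1 hF k) i j p
  simp only [div3, curl3, Fin.sum_univ_three, Matrix.cons_val_zero,
    Matrix.cons_val_one, Matrix.cons_val_two, Matrix.head_cons, Matrix.tail_cons]
  rw [pd_sub (hpd _ _) (hpd _ _), pd_sub (hpd _ _) (hpd _ _), pd_sub (hpd _ _) (hpd _ _),
    hcomm 0 1, hcomm 1 2, hcomm 2 0]
  ring

theorem curl3_grad3 (hf : ContDiff ℝ 2 f) (p : Pt) : curl3 (grad3 f) p = 0 := by
  ext i
  fin_cases i <;> simp [curl3, grad3, pd_pd_comm hf]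

theorem dtVec_curl3 (hF : ContDiff ℝ 2 F) (p : Pt) : dtVec (curl3 F) p = curl3 (dtVec F) p := by
  have hpd (i j : Fin 3) : DifferentiableAt ℝ (pd i fun q => F q j) p :=
    ((contDiff_pi.1 hF j).pd (m := 1) (by norm_num) i).differentiable one_ne_zero p
  ext i
  fin_cases i <;>
  · simp only [dtVec, curl3, Fin.zero_eta, Fin.mk_one, Fin.reduceFinMk, Matrix.cons_val]
    rw [dt_sub (hpd _ _) (hpd _ _), dt_pd_comm (contDiff_pi.1 hF _),
      dt_pd_comm (contDiff_pi.1 hF _)]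

end VectorCalculus

/-- `(∂ₜ + ℒᵤ)(η · dx)` in vector form: by Cartan's formula `ℒᵤ η = -u × (∇ × η) + ∇(u · η)`. -/
def materialLieDeriv (u η : Pt → Vec3) (p : Pt) : Vec3 :=
  dtVec η p - cross3 (u p) (curl3 η p) + grad3 (fun q => dot3 (u q) (η q)) p

theorem helicity_balance {η u : Pt → Vec3} (hη : ContDiff ℝ 2 η) (hu : ContDiff ℝ 2 u)
    (p : Pt) :
    dt (fun q => dot3 (η q) (curl3 η q)) p
        + div3 (fun q => dot3 (η q) (curl3 η q) • u q
            + cross3 (η q) (materialLieDeriv u η q)) p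
      = 2 * dot3 (materialLieDeriv u η p) (curl3 η p) := by
  simp only [materialLieDeriv]
  set ω := curl3 η
  set E := dtVec η
  set f := fun q => dot3 (u q) (η q)
  have hη₁ : ContDiff ℝ 1 η := hη.of_le (by norm_num)
  have hω : ContDiff ℝ 1 ω := hη.curl3 (by norm_num)
  have hE : ContDiff ℝ 1 E := hη.dtVec (by norm_num)
  have hf : ContDiff ℝ 2 f := hu.dot3 hη
  have hf₁ : ContDiff ℝ 1 f := hf.of_le (by norm_num)
  have hgf : ContDiff ℝ 1 (grad3 f) := hf.grad3 (by norm_num)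
  have hηE : ContDiff ℝ 1 (fun q => cross3 (η q) (E q)) := hη₁.cross3 hE
  have hfω : ContDiff ℝ 1 (fun q => f q • ω q) := hf₁.smul hω
  have hηgf : ContDiff ℝ 1 (fun q => cross3 (η q) (grad3 f q)) := hη₁.cross3 hgf
  have hd {g : Pt → Vec3} (hg : ContDiff ℝ 1 g) : DifferentiableAt ℝ g p :=
    hg.differentiable one_ne_zero p
  -- `η × (u × ω) = ψ u - f ω`, so the advective flux `ψ u` cancels
  have hflux :
      (fun q => dot3 (η q) (ω q) • u q + cross3 (η q) (E q - cross3 (u q) (ω q) + grad3 f q))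
        = fun q => (cross3 (η q) (E q) + f q • ω q) + cross3 (η q) (grad3 f q) := by
    funext q
    simp only [cross3_eq_crossProduct, map_add, map_sub, cross_cross_eq_smul_sub_smul',
      dot3_eq_dotProduct, f, dotProduct_comm (u q)]
    abel
  have hdt : dt (fun q => dot3 (η q) (ω q)) p = dot3 (E p) (ω p) + dot3 (η p) (curl3 E p) := by
    rw [dt_dot3 (hd hη₁) (hd hω), dtVec_curl3 hη]
  have hdiv : div3 (fun q => (cross3 (η q) (E q) + f q • ω q) + cross3 (η q) (grad3 f q)) p
      = dot3 (E p) (ω p) - dot3 (η p) (curl3 E p) + 2 * dot3 (grad3 f p) (ω p) := by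
    rw [div3_add (hd (hηE.add hfω)) (hd hηgf), div3_add (hd hηE) (hd hfω),
      div3_cross3 (hd hη₁) (hd hE), div3_smul (hf₁.differentiable one_ne_zero p) (hd hω),
      div3_curl3 hη, div3_cross3 (hd hη₁) (hd hgf), curl3_grad3 hf, dot3_eq_dotProduct (η p) 0,
      dotProduct_zero]
    ring
  have hLω : dot3 (E p - cross3 (u p) (ω p) + grad3 f p) (ω p)
      = dot3 (E p) (ω p) + dot3 (grad3 f p) (ω p) := by
    rw [dot3_eq_dotProduct, add_dotProduct, sub_dotProduct, dotProduct_comm (cross3 _ _),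
      cross3_eq_crossProduct, dot_cross_self, sub_zero]
    rfl
  rw [hflux, hdt, hdiv, hLω]
  ring

theorem dot3_curl3_eq_zero_of_curl3_eq_cross3 {A η : Pt → Vec3} {p : Pt} (hA : ContDiff ℝ 2 A)
    (hη : DifferentiableAt ℝ η p) (hfrob : ∀ q, curl3 A q = cross3 (η q) (A q)) :
    dot3 (A p) (curl3 η p) = 0 := by
  have hdiv := div3_curl3 hA p
  rw [show curl3 A = fun q => cross3 (η q) (A q) from funext hfrob,
    div3_cross3 hη (hA.differentiable two_ne_zero p), hfrob p, dot3_eq_dotProduct (η p),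
    cross3_eq_crossProduct, dot_self_cross, sub_zero] at hdiv
  exact hdiv

theorem godbillon_vey_local_conservation_general
    (Atil η u : Pt → Vec3) (α : Pt → ℝ)
    (hAtil : SmoothV Atil) (hη : SmoothV η) (hu : SmoothV u)
    (hfrob : ∀ p : Pt, curl3 Atil p = cross3 (η p) (Atil p))
    (hevol : ∀ p : Pt,
      dtVec η p - cross3 (u p) (curl3 η p)
        + grad3 (fun q => dot3 (u q) (η q)) p = α p • Atil p) :
    ∀ p : Pt,
      dt (fun q => dot3 (η q) (curl3 η q)) p
        + div3 (fun q =>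
            dot3 (η q) (curl3 η q) • u q + α q • curl3 Atil q) p = 0 := by
  intro p
  have hL : ∀ q, materialLieDeriv u η q = α q • Atil q := hevol
  have hflux : (fun q => dot3 (η q) (curl3 η q) • u q + α q • curl3 Atil q)
      = fun q => dot3 (η q) (curl3 η q) • u q + cross3 (η q) (materialLieDeriv u η q) := by
    funext q
    rw [hL, hfrob, cross3_eq_crossProduct, cross3_eq_crossProduct, map_smul]
  have hAω := dot3_curl3_eq_zero_of_curl3_eq_cross3 (p := p)
    (ContDiff.of_le hAtil (by norm_cast)) (ContDiff.differentiable hη (by simp) p) hfrob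
  rw [hflux,
    helicity_balance (ContDiff.of_le hη (by norm_cast)) (ContDiff.of_le hu (by norm_cast)), hL,
    dot3_eq_dotProduct, smul_dotProduct, ← dot3_eq_dotProduct, hAω, smul_zero, mul_zero]

/-- local Godbillon–Vey conservation law: if ∇×Ã = η×Ã and
    ∂η/∂t − u×(∇×η) + ∇(u·η) = αÃ, then ψ = η·(∇×η) satisfies
    ∂ψ/∂t + ∇·(uψ + α∇×Ã) = 0. -/
theorem godbillon_vey_local_conservation
    (Atil η u : Pt → Vec3) (α : Pt → ℝ)
    (hAtil : SmoothV Atil) (hη : SmoothV η) (hu : SmoothV u) (hα : SmoothS α)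
    (hfrob : ∀ p : Pt, curl3 Atil p = cross3 (η p) (Atil p))
    (hevol : ∀ p : Pt,
      dtVec η p - cross3 (u p) (curl3 η p)
        + grad3 (fun q => dot3 (u q) (η q)) p = α p • Atil p) :
    ∀ p : Pt,
      dt (fun q => dot3 (η q) (curl3 η q)) p
        + div3 (fun q =>
            dot3 (η q) (curl3 η q) • u q + α q • curl3 Atil q) p = 0 :=
  godbillon_vey_local_conservation_general Atil η u α hAtil hη hu hfrob hevol
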